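/- arXiv:1412.0122 — 2 statements merged into one kernel-verified Lean document; each statement's English description precedes it below -/
import Mathlib

section
/- Let Γ be a triple Dynkin diagram whose underlying diagram Γ₀ (obtained by changing the weight-3 vertex back to weight 2) is a Dynkin diagram of type A, D or E. Identifying divisors in both lattices via the common basis E₀,…,Eₙ, every root of Γ (divisor Y with (Y·Y)_Γ ∈ {-2,-3}) is a root of Γ₀ (satisfies (Y·Y)_{Γ₀} = -2). Moreover, (Y·Y)_Γ = (Y·Y)_{Γ₀} - a₀², and if (Y·Y)_Γ = -2 then a₀ = 0, while if (Y·Y)_Γ = -3 then a₀ = ±1. -/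
open Finset

def treeM (n : ℕ) (G : SimpleGraph (Fin n)) [DecidableRel G.Adj] (w : Fin n → ℤ)
    (i j : Fin n) : ℤ :=
  if i = j then -w i else if G.Adj i j then 1 else 0

def quadForm (n : ℕ) (M : Fin n → Fin n → ℤ) (Y : Fin n → ℤ) : ℤ :=
  ∑ i, ∑ j, Y i * M i j * Y j

/-!
Changing the weight of `E₀` from `2` to `3` subtracts `a₀²` from the self-intersection.
The form of `Γ₀` has even diagonal, hence takes only even values, and it is negative
definite. So if `(Y·Y)_Γ ∈ {-2, -3}`, then `(Y·Y)_{Γ₀}` is an even negative number that is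
at least `(Y·Y)_Γ ≥ -3`, i.e. it equals `-2`, and `a₀² = -2 - (Y·Y)_Γ ∈ {0, 1}`.
-/

theorem sum_sum_eq_two_mul_sum_sum_lt_add_sum_diag {ι R : Type*} [Fintype ι]
    [LinearOrder ι] [CommSemiring R] (f : ι → ι → R) (hf : ∀ i j, f i j = f j i) :
    ∑ i, ∑ j, f i j = 2 * ∑ i, ∑ j, (if i < j then f i j else 0) + ∑ i, f i i := by
  have hsplit : ∀ i j, f i j = (if i < j then f i j else 0) + (if j < i then f i j else 0)
      + (if i = j then f i j else 0) := by
    intro i j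
    rcases lt_trichotomy i j with h | rfl | h
    · simp [h, h.not_gt, h.ne]
    · simp
    · simp [h, h.not_gt, h.ne']
  have hlower : ∑ i, ∑ j, (if j < i then f i j else 0)
      = ∑ i, ∑ j, (if i < j then f i j else 0) := by
    rw [sum_comm]
    simp only [hf]
  rw [sum_congr rfl fun i _ => sum_congr rfl fun j _ => hsplit i j]
  simp only [sum_add_distrib, hlower, sum_ite_eq, mem_univ, if_true]
  ring

lemma quadForm_even {n : ℕ} {M : Fin n → Fin n → ℤ} (hsymm : ∀ i j, M i j = M j i)
    (hdiag : ∀ i, (2 : ℤ) ∣ M i i) (Y : Fin n → ℤ) : (2 : ℤ) ∣ quadForm n M Y := by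
  unfold quadForm
  rw [sum_sum_eq_two_mul_sum_sum_lt_add_sum_diag _ fun i j => by rw [hsymm]; ring]
  exact dvd_add (dvd_mul_right _ _) (dvd_sum fun i _ => ((hdiag i).mul_left _).mul_right _)

@[simp]
lemma quadForm_zero (n : ℕ) (M : Fin n → Fin n → ℤ) : quadForm n M 0 = 0 := by
  simp [quadForm]

lemma treeM_symm {n : ℕ} (G : SimpleGraph (Fin n)) [DecidableRel G.Adj] (w : Fin n → ℤ)
    (i j : Fin n) : treeM n G w i j = treeM n G w j i := by
  unfold treeM
  rcases eq_or_ne i j with rfl | h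
  · rfl
  · simp [h, h.symm, G.adj_comm]

lemma quadForm_treeM_sub_quadForm_treeM {n : ℕ} (G : SimpleGraph (Fin n))
    [DecidableRel G.Adj] (w w' : Fin n → ℤ) (Y : Fin n → ℤ) :
    quadForm n (treeM n G w) Y - quadForm n (treeM n G w') Y = ∑ i, (w' i - w i) * Y i ^ 2 := by
  unfold quadForm
  simp only [← sum_sub_distrib]
  refine sum_congr rfl fun i _ => ?_
  have hterm : ∀ j, Y i * treeM n G w i j * Y j - Y i * treeM n G w' i j * Y j =
      if i = j then (w' i - w i) * Y i ^ 2 else 0 := by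
    intro j
    unfold treeM
    split_ifs with h <;> first | subst h; ring | ring
  simp [hterm]

theorem stmt_3_general (n : ℕ) (G : SimpleGraph (Fin (n + 1))) [DecidableRel G.Adj]
    (wΓ : Fin (n + 1) → ℤ) (hwΓ0 : wΓ 0 = 3) (hwΓ : ∀ i, i ≠ 0 → wΓ i = 2)
    (w₀ : Fin (n + 1) → ℤ) (hw₀ : ∀ i, w₀ i = 2)
    (hADE : ∀ x : Fin (n + 1) → ℤ, x ≠ 0 → quadForm (n + 1) (treeM (n + 1) G w₀) x < 0) :
    ∀ Y : Fin (n + 1) → ℤ,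
      quadForm (n + 1) (treeM (n + 1) G wΓ) Y
        = quadForm (n + 1) (treeM (n + 1) G w₀) Y - (Y 0) ^ 2 ∧
      ((quadForm (n + 1) (treeM (n + 1) G wΓ) Y = -2 ∨
        quadForm (n + 1) (treeM (n + 1) G wΓ) Y = -3) →
        quadForm (n + 1) (treeM (n + 1) G w₀) Y = -2) ∧
      (quadForm (n + 1) (treeM (n + 1) G wΓ) Y = -2 → Y 0 = 0) ∧
      (quadForm (n + 1) (treeM (n + 1) G wΓ) Y = -3 → Y 0 = 1 ∨ Y 0 = -1) := by
  intro Y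
  have hweights : ∀ i, w₀ i - wΓ i = if i = 0 then -1 else 0 := by
    intro i
    split_ifs with h
    · rw [h, hw₀, hwΓ0]; norm_num
    · rw [hw₀, hwΓ i h]; norm_num
  have hdiff : quadForm (n + 1) (treeM (n + 1) G wΓ) Y
      = quadForm (n + 1) (treeM (n + 1) G w₀) Y - Y 0 ^ 2 := by
    have := quadForm_treeM_sub_quadForm_treeM G wΓ w₀ Y
    simp only [hweights, ite_mul, zero_mul, sum_ite_eq', mem_univ, if_true] at this
    linarith
  have heven : (2 : ℤ) ∣ quadForm (n + 1) (treeM (n + 1) G w₀) Y :=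
    quadForm_even (treeM_symm G w₀) (fun i => ⟨-1, by simp [treeM, hw₀]⟩) Y
  have hroot : quadForm (n + 1) (treeM (n + 1) G wΓ) Y = -2 ∨
      quadForm (n + 1) (treeM (n + 1) G wΓ) Y = -3 →
      quadForm (n + 1) (treeM (n + 1) G w₀) Y = -2 := by
    intro hq
    have hneg := hADE Y (by rintro rfl; simp at hq)
    obtain ⟨k, hk⟩ := heven
    have := sq_nonneg (Y 0)
    omega
  refine ⟨hdiff, hroot, fun hq => ?_, fun hq => ?_⟩
  · exact pow_eq_zero_iff two_ne_zero |>.mp (by linarith [hroot (.inl hq)])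
  · exact sq_eq_one_iff.mp (by linarith [hroot (.inr hq)])

/-- `Γ` is the tree `G` with weight `3` at the vertex `0` and weight `2` elsewhere;
its underlying diagram `Γ₀` has all weights `2` and is assumed to be an ADE Dynkin
diagram (encoded by negative definiteness of its intersection form).  Then
`(Y·Y)_Γ = (Y·Y)_{Γ₀} - a₀²`; every root of `Γ` is a root of `Γ₀`; roots with
`(Y·Y)_Γ = -2` have `a₀ = 0` and roots with `(Y·Y)_Γ = -3` have `a₀ = ±1`. -/
theorem stmt_3 (n : ℕ) (G : SimpleGraph (Fin (n + 1))) [DecidableRel G.Adj]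
    (hG : G.IsTree)
    (wΓ : Fin (n + 1) → ℤ) (hwΓ0 : wΓ 0 = 3) (hwΓ : ∀ i, i ≠ 0 → wΓ i = 2)
    (w₀ : Fin (n + 1) → ℤ) (hw₀ : ∀ i, w₀ i = 2)
    (hADE : ∀ x : Fin (n + 1) → ℤ, x ≠ 0 → quadForm (n + 1) (treeM (n + 1) G w₀) x < 0) :
    ∀ Y : Fin (n + 1) → ℤ,
      quadForm (n + 1) (treeM (n + 1) G wΓ) Y
        = quadForm (n + 1) (treeM (n + 1) G w₀) Y - (Y 0) ^ 2 ∧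
      ((quadForm (n + 1) (treeM (n + 1) G wΓ) Y = -2 ∨
        quadForm (n + 1) (treeM (n + 1) G wΓ) Y = -3) →
        quadForm (n + 1) (treeM (n + 1) G w₀) Y = -2) ∧
      (quadForm (n + 1) (treeM (n + 1) G wΓ) Y = -2 → Y 0 = 0) ∧
      (quadForm (n + 1) (treeM (n + 1) G wΓ) Y = -3 → Y 0 = 1 ∨ Y 0 = -1) :=
  stmt_3_general n G wΓ hwΓ0 hwΓ w₀ hw₀ hADE
end

section
/- In Hₙ (n ≥ 6), every positive root Y = Σ aᵢEᵢ with a₀ ≠ 0, a₁ ≠ 0 and a_{n-1} ≠ 0 satisfies: (a) a₀ = a₁ = a_{n-1} = 1; (b) a₁ ≤ a₂ ≤ a₃ ≥ a₄ ≥ … ≥ a_{n-1} and a₃ ≤ 3; (c) |aᵢ - aᵢ₊₁| ≤ 1 for all 1 ≤ i ≤ n-2. -/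
/-! Completing squares along the chain,
`-(Y·Y) = 3a₀² - 2a₀a₃ + A + B` with `A = a₁² + (a₂ - a₁)² + (a₃ - a₂)²` and
`B = a_{n-1}² + ∑_{3 ≤ i < n-1} (aᵢ - aᵢ₊₁)²`, the contributions of the two chain arms at the
branch vertex `E₃`. Each arm telescopes to `a₃`, and `t ≤ t²` for integers, so `A, B ≥ a₃`, with
equality only if the end value and all steps of the arm lie in `{0, 1}`; moreover `3A ≥ a₃²` by
Cauchy–Schwarz. These bounds and `-(Y·Y) ≤ 3` force `a₀ = 1` and `A = B = a₃`. -/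

open Finset

def HAdj (i j : ℕ) : Bool :=
  decide ((i = 0 ∧ j = 3) ∨ (j = 0 ∧ i = 3) ∨ (1 ≤ i ∧ i + 1 = j) ∨ (1 ≤ j ∧ j + 1 = i))

def HM (i j : ℕ) : ℤ :=
  if i = j then (if i = 0 then -3 else -2) else if HAdj i j then 1 else 0

def HQ (n : ℕ) (Y : ℕ → ℤ) : ℤ :=
  ∑ i ∈ Finset.range n, ∑ j ∈ Finset.range n, Y i * HM i j * Y j

theorem Finset.sum_Ico_sub' {m k : ℕ} (f : ℕ → ℤ) (hmk : m ≤ k) :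
    ∑ i ∈ Ico m k, (f i - f (i + 1)) = f m - f k := by
  rw [← neg_sub (f k), ← sum_Ico_sub f hmk, ← sum_neg_distrib]
  simp only [neg_sub]

theorem Int.le_sq_add_sum_sq {ι : Type*} {x b : ℤ} {s : Finset ι} {d : ι → ℤ}
    (h : x + ∑ i ∈ s, d i = b) : b ≤ x ^ 2 + ∑ i ∈ s, d i ^ 2 :=
  h ▸ add_le_add (Int.le_self_sq x) (sum_le_sum fun i _ => Int.le_self_sq (d i))

theorem Int.unit_steps_of_sq_add_sum_sq_eq {ι : Type*} {x b : ℤ} {s : Finset ι} {d : ι → ℤ}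
    (h : x + ∑ i ∈ s, d i = b) (heq : x ^ 2 + ∑ i ∈ s, d i ^ 2 = b) :
    (0 ≤ x ∧ x ≤ 1) ∧ ∀ i ∈ s, 0 ≤ d i ∧ d i ≤ 1 := by
  have unit_of_sq_eq : ∀ y : ℤ, y ^ 2 = y → 0 ≤ y ∧ y ≤ 1 :=
    fun y hy => ⟨by nlinarith, by nlinarith⟩
  obtain ⟨hx, hd⟩ := (add_eq_add_iff_eq_and_eq (Int.le_self_sq x)
    (sum_le_sum fun i _ => Int.le_self_sq (d i))).1 (h.trans heq.symm)
  exact ⟨unit_of_sq_eq x hx.symm, fun i hi =>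
    unit_of_sq_eq _ ((sum_eq_sum_iff_of_le fun i _ => Int.le_self_sq (d i)).1 hd i hi).symm⟩

theorem HM_comm (i j : ℕ) : HM i j = HM j i := by
  unfold HM HAdj
  split_ifs <;> simp_all <;> omega

theorem HM_of_lt_last {n i : ℕ} (hn : 4 ≤ n) (hi : i < n) :
    HM i n = if i = n - 1 then 1 else 0 := by
  unfold HM HAdj
  split_ifs <;> simp_all <;> omega

theorem sum_mul_HM_last {n : ℕ} (hn : 4 ≤ n) (Y : ℕ → ℤ) :
    ∑ i ∈ range n, Y i * HM i n * Y n = Y (n - 1) * Y n := by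
  rw [sum_eq_single (n - 1)]
  · rw [HM_of_lt_last hn (by omega), if_pos rfl, mul_one]
  · intro i hi hne
    rw [HM_of_lt_last hn (mem_range.1 hi), if_neg hne, mul_zero, zero_mul]
  · simp
    omega

theorem HQ_succ {n : ℕ} (hn : 4 ≤ n) (Y : ℕ → ℤ) :
    HQ (n + 1) Y = HQ n Y + 2 * Y (n - 1) * Y n - 2 * Y n ^ 2 := by
  have hrow : ∑ j ∈ range n, Y n * HM n j * Y j = Y (n - 1) * Y n := by
    rw [← sum_mul_HM_last hn Y]
    exact sum_congr rfl fun j _ => by rw [HM_comm]; ring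
  have hdiag : HM n n = -2 := by simp [HM]; omega
  simp only [HQ, sum_range_succ, sum_add_distrib, sum_mul_HM_last hn, hrow, hdiag]
  ring

theorem neg_HQ_eq {n : ℕ} (hn : 4 ≤ n) (Y : ℕ → ℤ) :
    -HQ n Y = 3 * Y 0 ^ 2 - 2 * Y 0 * Y 3
      + (Y 1 ^ 2 + ∑ i ∈ Ico 1 3, (Y (i + 1) - Y i) ^ 2)
      + (Y (n - 1) ^ 2 + ∑ i ∈ Ico 3 (n - 1), (Y i - Y (i + 1)) ^ 2) := by
  induction n, hn using Nat.le_induction with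
  | base =>
    simp [HQ, HM, HAdj, sum_range_succ, sum_Ico_succ_top]
    ring
  | succ n hn ih =>
    obtain ⟨m, rfl⟩ : ∃ m, n = m + 1 := ⟨n - 1, by omega⟩
    simp only [Nat.add_sub_cancel] at ih ⊢
    rw [HQ_succ hn, Nat.add_sub_cancel, sum_Ico_succ_top (by omega : 3 ≤ m)]
    linear_combination ih

theorem eq_of_le_three_of_arm_bounds {K c b A B : ℤ} (hK : K ≤ 3) (hc : 1 ≤ c)
    (hKeq : K = 3 * c ^ 2 - 2 * c * b + A + B) (hA : b ≤ A) (hB : b ≤ B)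
    (hA2 : b ^ 2 ≤ 3 * A) : c = 1 ∧ A = b ∧ B = b := by
  have hb : b ≤ 3 := by nlinarith [sq_nonneg (3 * c - b)]
  obtain rfl : c = 1 := by nlinarith
  omega

theorem stmt_13_general (n : ℕ) (hn : 6 ≤ n) (Y : ℕ → ℤ)
    (heff : ∀ i, 0 ≤ Y i)
    (hroot : HQ n Y = -2 ∨ HQ n Y = -3)
    (h0 : Y 0 ≠ 0) (h1 : Y 1 ≠ 0) (hlast : Y (n - 1) ≠ 0) :
    (Y 0 = 1 ∧ Y 1 = 1 ∧ Y (n - 1) = 1) ∧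
    (Y 1 ≤ Y 2 ∧ Y 2 ≤ Y 3 ∧ (∀ i, 3 ≤ i → i + 1 ≤ n - 1 → Y (i + 1) ≤ Y i) ∧
      Y 3 ≤ 3) ∧
    (∀ i, 1 ≤ i → i ≤ n - 2 → |Y i - Y (i + 1)| ≤ 1) := by
  have hteleA : Y 1 + ∑ i ∈ Ico 1 3, (Y (i + 1) - Y i) = Y 3 := by
    rw [sum_Ico_sub Y (by norm_num)]; ring
  have hteleB : Y (n - 1) + ∑ i ∈ Ico 3 (n - 1), (Y i - Y (i + 1)) = Y 3 := by
    rw [sum_Ico_sub' Y (by omega)]; ring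
  have hA2 : Y 3 ^ 2 ≤ 3 * (Y 1 ^ 2 + ∑ i ∈ Ico 1 3, (Y (i + 1) - Y i) ^ 2) := by
    rw [show Ico 1 3 = {1, 2} by decide, sum_pair (by norm_num)]
    nlinarith [sq_nonneg (Y 1 - (Y 2 - Y 1)), sq_nonneg (Y 1 - (Y 3 - Y 2)),
      sq_nonneg (Y 2 - Y 1 - (Y 3 - Y 2))]
  obtain ⟨hY0, hAeq, hBeq⟩ := eq_of_le_three_of_arm_bounds (K := -HQ n Y) (by omega)
    (lt_of_le_of_ne (heff 0) h0.symm) (neg_HQ_eq (by omega) Y)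
    (Int.le_sq_add_sum_sq hteleA) (Int.le_sq_add_sum_sq hteleB) hA2
  obtain ⟨hY1, hstepA⟩ := Int.unit_steps_of_sq_add_sum_sq_eq hteleA hAeq
  obtain ⟨hYlast, hstepB⟩ := Int.unit_steps_of_sq_add_sum_sq_eq hteleB hBeq
  have h12 : 0 ≤ Y 2 - Y 1 ∧ Y 2 - Y 1 ≤ 1 := hstepA 1 (by simp)
  have h23 : 0 ≤ Y 3 - Y 2 ∧ Y 3 - Y 2 ≤ 1 := hstepA 2 (by simp)
  refine ⟨⟨hY0, by omega, by omega⟩, ⟨by omega, by omega, fun i hi3 hin => ?_, by omega⟩,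
    fun i hi1 hin => abs_le.2 ?_⟩
  · have := hstepB i (mem_Ico.2 ⟨hi3, by omega⟩)
    omega
  · rcases lt_or_ge i 3 with hi3 | hi3
    · have := hstepA i (mem_Ico.2 ⟨hi1, hi3⟩)
      omega
    · have := hstepB i (mem_Ico.2 ⟨hi3, by omega⟩)
      omega

/-- Structure of the positive roots of `Hₙ` (`n ≥ 6`) with `a₀ ≠ 0`, `a₁ ≠ 0` and
`a_{n-1} ≠ 0`:
(a) `a₀ = a₁ = a_{n-1} = 1`;
(b) `a₁ ≤ a₂ ≤ a₃ ≥ a₄ ≥ ⋯ ≥ a_{n-1}` and `a₃ ≤ 3`;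
(c) `|aᵢ - aᵢ₊₁| ≤ 1` for `1 ≤ i ≤ n-2`. -/
theorem stmt_13 (n : ℕ) (hn : 6 ≤ n) (Y : ℕ → ℤ)
    (hsupp : ∀ i, n ≤ i → Y i = 0)
    (heff : ∀ i, 0 ≤ Y i)
    (hroot : HQ n Y = -2 ∨ HQ n Y = -3)
    (h0 : Y 0 ≠ 0) (h1 : Y 1 ≠ 0) (hlast : Y (n - 1) ≠ 0) :
    (Y 0 = 1 ∧ Y 1 = 1 ∧ Y (n - 1) = 1) ∧
    (Y 1 ≤ Y 2 ∧ Y 2 ≤ Y 3 ∧ (∀ i, 3 ≤ i → i + 1 ≤ n - 1 → Y (i + 1) ≤ Y i) ∧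
      Y 3 ≤ 3) ∧
    (∀ i, 1 ≤ i → i ≤ n - 2 → |Y i - Y (i + 1)| ≤ 1) :=
  stmt_13_general n hn Y heff hroot h0 h1 hlast
end
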